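/- arXiv:1002.2942 — 2 statements merged into one kernel-verified Lean document; each statement's English description precedes it below -/
import Mathlib

section
/- Let f : X → X be a measure-preserving transformation of a probability space (X, μ) and let v : X → ℝⁿ be measurable. Suppose there is a hyperbolic matrix γ ∈ GL(n,ℝ) with v ∘ f = γ · v μ-almost everywhere. Then v = 0 μ-almost everywhere. -/
/-!
Push `μ` forward along `v`: since `v ∘ f = γ v` a.e., `ν = v₊μ` is a `γ`-invariant, hence also
`γ⁻¹`-invariant, probability measure on `ℝⁿ`. By Poincaré recurrence, for `ν`-a.e. `w` both orbits
`γᵏ w` and `γ⁻ᵏ w` return infinitely often to the unit ball around `w`, so they are frequently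
bounded. Over `ℂ`, split the characteristic polynomial of `γ` as `p₁ p₂` with the roots of `p₁`
inside and those of `p₂` outside the unit circle, and let `P + Q = 1` come from a Bézout identity
`a p₁ + b p₂ = 1`. Removing one linear factor at a time, `γᵏ P → 0` and `γ⁻ᵏ Q → 0`; together
with the frequent bounds this forces `P w = Q w = 0`, i.e. `w = 0`.
-/

open Matrix MeasureTheory

/-- A real matrix is hyperbolic if it has no (complex) eigenvalue of modulus one. -/
def HyperbolicR {n : ℕ} (A : Matrix (Fin n) (Fin n) ℝ) : Prop :=
  ∀ z : ℂ, ‖z‖ = 1 → ¬ (A.map (fun a => (a : ℂ))).charpoly.IsRoot z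

open Polynomial Filter Topology

theorem tendsto_zero_of_le_mul_add {a b : ℕ → ℝ} {r : ℝ} (ha : ∀ k, 0 ≤ a k) (hr₀ : 0 ≤ r)
    (hr₁ : r < 1) (hab : ∀ k, a (k + 1) ≤ r * a k + b k) (hb : Tendsto b atTop (𝓝 0)) :
    Tendsto a atTop (𝓝 0) := by
  refine tendsto_order.2 ⟨fun e he => .of_forall fun k => he.trans_le (ha k), fun ε hε => ?_⟩
  obtain ⟨N, hN⟩ := eventually_atTop.1
    (hb.eventually (gt_mem_nhds (show 0 < (1 - r) * (ε / 2) by nlinarith)))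
  set M := max (a N - ε / 2) 0
  have hexcess : ∀ j, a (N + j) - ε / 2 ≤ r ^ j * M := by
    intro j
    induction j with
    | zero => simp [M]
    | succ j ih =>
      have hstep := hab (N + j)
      have hbN := hN (N + j) le_self_add
      calc a (N + (j + 1)) - ε / 2 ≤ r * (a (N + j) - ε / 2) := by rw [← add_assoc]; linarith
        _ ≤ r * (r ^ j * M) := mul_le_mul_of_nonneg_left ih hr₀
        _ = r ^ (j + 1) * M := by ring
  obtain ⟨J, hJ⟩ := eventually_atTop.1 <|
    ((tendsto_pow_atTop_nhds_zero_of_lt_one hr₀ hr₁).mul_const M).eventually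
      (gt_mem_nhds (show (0 : ℝ) * M < ε / 2 by linarith))
  refine eventually_atTop.2 ⟨N + J, fun k hk => ?_⟩
  obtain ⟨j, rfl⟩ := Nat.exists_eq_add_of_le (le_of_add_le_left hk)
  linarith [hexcess j, hJ j (by omega)]

theorem isCoprime_multiset_prod_X_sub_C {K : Type*} [Field K] [IsAlgClosed K] {s t : Multiset K}
    (h : ∀ a ∈ s, a ∉ t) :
    IsCoprime (s.map fun z => X - C z).prod (t.map fun z => X - C z).prod := by
  rw [isCoprime_iff_aeval_ne_zero_of_isAlgClosed K K]
  intro a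
  simp only [aeval_def, eval₂_multiset_prod, Multiset.map_map, Function.comp_def, eval₂_sub,
    eval₂_X, eval₂_C, Algebra.algebraMap_self, RingHom.id_apply, ne_eq, Multiset.prod_eq_zero_iff,
    Multiset.mem_map, sub_eq_zero]
  by_cases ha : a ∈ s
  · exact .inr fun ⟨b, hb, hab⟩ => h a ha (hab ▸ hb)
  · exact .inl fun ⟨b, hb, hab⟩ => ha (hab ▸ hb)

theorem Polynomial.Monic.exists_eq_prod_X_sub_C_mul_prod_X_sub_C {p : ℂ[X]} (hp : p.Monic)
    (hroots : ∀ z ∈ p.roots, ‖z‖ ≠ 1) :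
    ∃ s t : Multiset ℂ, p = (s.map fun z => X - C z).prod * (t.map fun z => X - C z).prod ∧
      (∀ z ∈ s, ‖z‖ < 1) ∧ ∀ z ∈ t, 1 < ‖z‖ := by
  classical
  refine ⟨p.roots.filter (‖·‖ < 1), p.roots.filter (¬ ‖·‖ < 1), ?_, fun z hz => ?_, fun z hz => ?_⟩
  · rw [← Multiset.prod_add, ← Multiset.map_add, Multiset.filter_add_not]
    exact (IsAlgClosed.splits p).eq_prod_roots_of_monic hp
  · exact (Multiset.mem_filter.1 hz).2
  · obtain ⟨hz, hlt⟩ := Multiset.mem_filter.1 hz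
    exact lt_of_le_of_ne (not_lt.1 hlt) (hroots z hz).symm

section NormedAlgebra

variable {A : Type*} [NormedRing A] [NormedAlgebra ℂ A]

theorem tendsto_pow_mul_of_mul_eq_smul_add {T R W Y : A} {c : ℂ} (hc : ‖c‖ < 1)
    (hTR : Commute T R) (hTW : T * W = c • W + R * Y)
    (hY : Tendsto (fun k => T ^ k * Y) atTop (𝓝 0)) :
    Tendsto (fun k => T ^ k * W) atTop (𝓝 0) := by
  have hstep : ∀ k, T ^ (k + 1) * W = c • (T ^ k * W) + R * (T ^ k * Y) := fun k => by
    rw [pow_succ, mul_assoc, hTW, mul_add, mul_smul_comm, ← mul_assoc, ← mul_assoc,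
      (hTR.pow_left k).eq]
  have hRY : Tendsto (fun k => ‖R * (T ^ k * Y)‖) atTop (𝓝 0) := by
    simpa using (hY.const_mul R).norm
  refine tendsto_zero_iff_norm_tendsto_zero.2 <|
    tendsto_zero_of_le_mul_add (fun _ => norm_nonneg _) (norm_nonneg c) hc (fun k => ?_) hRY
  rw [hstep]
  exact (norm_add_le _ _).trans (add_le_add_left (norm_smul_le _ _) _)

/-- Applied with `T = B`, `c = z` and with `T = B⁻¹`, `c = z⁻¹`. -/
theorem tendsto_pow_mul_of_aeval_mul_eq_zero {T B : A} (s : Multiset ℂ)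
    (hs : ∀ z ∈ s, ∃ c : ℂ, ‖c‖ < 1 ∧ ∃ R : A, Commute T R ∧
      T - algebraMap ℂ A c = R * (B - algebraMap ℂ A z))
    {W : A} (hW : aeval B (s.map fun z => X - C z).prod * W = 0) :
    Tendsto (fun k => T ^ k * W) atTop (𝓝 0) := by
  induction s using Multiset.induction_on generalizing W with
  | empty => simp_all
  | cons z s ih =>
    obtain ⟨c, hc, R, hTR, hTRB⟩ := hs z (Multiset.mem_cons_self z s)
    refine tendsto_pow_mul_of_mul_eq_smul_add hc hTR (Y := (B - algebraMap ℂ A z) * W) ?_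
      (ih (fun w hw => hs w (Multiset.mem_cons_of_mem hw)) ?_)
    · rw [← mul_assoc, ← hTRB, sub_mul, Algebra.smul_def]
      abel
    · rw [Multiset.map_cons, Multiset.prod_cons, mul_comm, map_mul] at hW
      simpa [mul_assoc] using hW

theorem sub_algebraMap_inv_eq_smul_mul {B B' : A} (hB'B : B' * B = 1) {z : ℂ} (hz : z ≠ 0) :
    B' - algebraMap ℂ A z⁻¹ = (-z⁻¹ • B') * (B - algebraMap ℂ A z) := by
  rw [smul_mul_assoc, mul_sub, hB'B, ← Algebra.commutes, ← Algebra.smul_def, smul_sub, smul_smul,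
    Algebra.algebraMap_eq_smul_one, neg_mul, inv_mul_cancel₀ hz, neg_one_smul, neg_smul,
    sub_neg_eq_add]
  abel

theorem exists_add_eq_one_tendsto_pow_mul {B B' : A} (hBB' : B * B' = 1) (hB'B : B' * B = 1)
    {p : ℂ[X]} (hp : p.Monic) (hpB : aeval B p = 0) (hroots : ∀ z ∈ p.roots, ‖z‖ ≠ 1) :
    ∃ P Q : A, P + Q = 1 ∧ Commute B' P ∧ Commute B Q ∧
      Tendsto (fun k => B ^ k * P) atTop (𝓝 0) ∧ Tendsto (fun k => B' ^ k * Q) atTop (𝓝 0) := by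
  obtain ⟨s, t, rfl, hs, ht⟩ := hp.exists_eq_prod_X_sub_C_mul_prod_X_sub_C hroots
  obtain ⟨a, b, hab⟩ := isCoprime_multiset_prod_X_sub_C fun z hzs hzt =>
    (hs z hzs).not_gt (ht z hzt)
  set p₁ := (s.map fun z => X - C z).prod
  set p₂ := (t.map fun z => X - C z).prod
  have hcomm (q : ℂ[X]) {x : A} (hx : Commute B x) : Commute x (aeval B q) := by
    rw [aeval_eq_smeval]; exact (smeval_commute_left ℂ q hx).symm
  refine ⟨aeval B (b * p₂), aeval B (a * p₁), ?_, hcomm _ (hBB'.trans hB'B.symm),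
    hcomm _ (.refl B), ?_, ?_⟩
  · rw [← map_add, add_comm, hab, map_one]
  · refine tendsto_pow_mul_of_aeval_mul_eq_zero s
      (fun z hz => ⟨z, hs z hz, 1, .one_right B, (one_mul _).symm⟩) ?_
    rw [← map_mul, mul_left_comm, map_mul, hpB, mul_zero]
  · refine tendsto_pow_mul_of_aeval_mul_eq_zero t (fun z hz => ⟨z⁻¹, ?_, -z⁻¹ • B',
      (Commute.refl B').smul_right _, sub_algebraMap_inv_eq_smul_mul hB'B ?_⟩) ?_
    · rw [norm_inv]; exact inv_lt_one_of_one_lt₀ (ht z hz)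
    · rintro rfl; exact absurd (ht 0 hz) (by norm_num)
    · rw [← map_mul, mul_left_comm, mul_comm p₂, map_mul, hpB, mul_zero]

end NormedAlgebra

namespace Matrix

variable {ι : Type*} [Fintype ι] [DecidableEq ι]

theorem iterate_mulVec {R : Type*} [Semiring R] (M : Matrix ι ι R) (k : ℕ) :
    (M *ᵥ ·)^[k] = ((M ^ k) *ᵥ ·) := by
  induction k with
  | zero => ext; simp
  | succ k ih => ext w; rw [Function.iterate_succ_apply', ih, mulVec_mulVec, pow_succ']

theorem norm_mapMatrix_ofRealHom_mulVec (M : Matrix ι ι ℝ) (w : ι → ℝ) :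
    ‖Complex.ofRealHom.mapMatrix M *ᵥ (fun i => (w i : ℂ))‖ = ‖M *ᵥ w‖ := by
  have : Complex.ofRealHom.mapMatrix M *ᵥ (fun i => (w i : ℂ)) = fun i => ((M *ᵥ w) i : ℂ) :=
    funext fun i => (RingHom.map_mulVec Complex.ofRealHom M w i).symm
  simp only [this, Pi.norm_def, Complex.nnnorm_real]

section LinftyOp

attribute [local instance] Matrix.linftyOpNormedRing Matrix.linftyOpNormedAlgebra

theorem mulVec_eq_zero_of_tendsto_of_frequently_le {P : Matrix ι ι ℂ} {U V : ℕ → Matrix ι ι ℂ}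
    (hP : ∀ k, P = U k * V k) (hU : Tendsto U atTop (𝓝 0)) {w : ι → ℂ} {C : ℝ}
    (hV : ∃ᶠ k in atTop, ‖V k *ᵥ w‖ ≤ C) : P *ᵥ w = 0 := by
  refine norm_le_zero_iff.1 <| le_of_tendsto_of_tendsto_of_frequently tendsto_const_nhds
    (by simpa using hU.norm.mul_const C) (hV.mono fun k hk => ?_)
  calc ‖P *ᵥ w‖ = ‖U k *ᵥ (V k *ᵥ w)‖ := by rw [hP k, mulVec_mulVec]
    _ ≤ ‖U k‖ * ‖V k *ᵥ w‖ := linfty_opNorm_mulVec _ _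
    _ ≤ ‖U k‖ * C := by gcongr

theorem eq_zero_of_frequently_norm_pow_mulVec_le {B B' : Matrix ι ι ℂ} (hBB' : B * B' = 1)
    (hB'B : B' * B = 1) (hB : ∀ z ∈ B.charpoly.roots, ‖z‖ ≠ 1) {w : ι → ℂ} {C : ℝ}
    (h₁ : ∃ᶠ k in atTop, ‖(B ^ k) *ᵥ w‖ ≤ C) (h₂ : ∃ᶠ k in atTop, ‖(B' ^ k) *ᵥ w‖ ≤ C) :
    w = 0 := by
  obtain ⟨P, Q, hPQ, hB'P, hBQ, hP, hQ⟩ :=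
    exists_add_eq_one_tendsto_pow_mul hBB' hB'B B.charpoly_monic B.aeval_self_charpoly hB
  have hcomm : Commute B B' := hBB'.trans hB'B.symm
  have hPw : P *ᵥ w = 0 := mulVec_eq_zero_of_tendsto_of_frequently_le (fun k => by
    rw [mul_assoc, ← (hB'P.pow_left k).eq, ← mul_assoc, ← hcomm.mul_pow, hBB', one_pow,
      one_mul]) hP h₂
  have hQw : Q *ᵥ w = 0 := mulVec_eq_zero_of_tendsto_of_frequently_le (fun k => by
    rw [mul_assoc, ← (hBQ.pow_left k).eq, ← mul_assoc, ← hcomm.symm.mul_pow, hB'B, one_pow,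
      one_mul]) hQ h₁
  rw [← one_mulVec w, ← hPQ, add_mulVec, hPw, hQw, add_zero]

end LinftyOp

end Matrix

theorem HyperbolicR.eq_zero_of_frequently_norm_le {n : ℕ} {γ : Matrix (Fin n) (Fin n) ℝ}
    (hγ : HyperbolicR γ) (hγinv : IsUnit γ) {w : Fin n → ℝ} {C : ℝ}
    (h₁ : ∃ᶠ k in atTop, ‖(γ ^ k) *ᵥ w‖ ≤ C) (h₂ : ∃ᶠ k in atTop, ‖(γ⁻¹ ^ k) *ᵥ w‖ ≤ C) :
    w = 0 := by
  have hdet := (isUnit_iff_isUnit_det γ).1 hγinv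
  set φ := Complex.ofRealHom.mapMatrix (m := Fin n)
  have hw := eq_zero_of_frequently_norm_pow_mulVec_le (B := φ γ) (B' := φ γ⁻¹)
    (w := fun i => (w i : ℂ)) (C := C)
    (by rw [← map_mul, mul_nonsing_inv _ hdet, map_one])
    (by rw [← map_mul, nonsing_inv_mul _ hdet, map_one])
    (fun z hz h1 => hγ z h1 (isRoot_of_mem_roots hz))
    (h₁.mono fun k hk => by rwa [← map_pow, norm_mapMatrix_ofRealHom_mulVec])
    (h₂.mono fun k hk => by rwa [← map_pow, norm_mapMatrix_ofRealHom_mulVec])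
  exact funext fun i => Complex.ofReal_injective (congrFun hw i)

namespace MeasureTheory.MeasurePreserving

variable {α β : Type*} [MeasurableSpace α] [MeasurableSpace β]

theorem map_of_ae_semiconj {μ : Measure α} {f : α → α} {g : β → β} {v : α → β}
    (hf : MeasurePreserving f μ μ) (hv : Measurable v) (hg : Measurable g)
    (h : ∀ᵐ x ∂μ, v (f x) = g (v x)) : MeasurePreserving g (μ.map v) (μ.map v) :=
  ⟨hg, by rw [Measure.map_map hg hv, Measure.map_congr (f := g ∘ v) (g := v ∘ f)
    (h.mono fun x hx => hx.symm), ← Measure.map_map hv hf.measurable, hf.map_eq]⟩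

theorem of_leftInverse {ν : Measure β} {g h : β → β} (hg : MeasurePreserving g ν ν)
    (hh : Measurable h) (hhg : Function.LeftInverse h g) : MeasurePreserving h ν ν :=
  ⟨hh, by conv_lhs => rw [← hg.map_eq, Measure.map_map hh hg.measurable, hhg.comp_eq_id,
    Measure.map_id]⟩

theorem ae_frequently_norm_iterate_le {E : Type*} [NormedAddCommGroup E] [MeasurableSpace E]
    [OpensMeasurableSpace E] [SecondCountableTopology E] {ν : Measure E} [IsFiniteMeasure ν]
    {T : E → E} (hT : MeasurePreserving T ν ν) :
    ∀ᵐ w ∂ν, ∃ᶠ k in atTop, ‖T^[k] w‖ ≤ ‖w‖ + 1 := by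
  filter_upwards [hT.conservative.ae_frequently_mem_of_mem_nhds] with w hw
  refine (hw _ (Metric.closedBall_mem_nhds w one_pos)).mono fun k hk => ?_
  simpa [add_comm] using norm_le_norm_add_const_of_dist_le (Metric.mem_closedBall.1 hk)

end MeasureTheory.MeasurePreserving

/-- If `f` is an invertible measure-preserving transformation of a probability
space `(X, μ)`, `v : X → ℝⁿ` is measurable, and `v ∘ f = γ · v` μ-a.e. for some hyperbolic
`γ ∈ GL(n,ℝ)`, then `v = 0` μ-a.e. -/
theorem stmt_2 {n : ℕ} {X : Type*} [MeasurableSpace X]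
    (μ : Measure X) [IsProbabilityMeasure μ]
    (f : X ≃ᵐ X) (hf : MeasurePreserving f μ μ)
    (v : X → Fin n → ℝ) (hv : Measurable v)
    (γ : Matrix (Fin n) (Fin n) ℝ) (hγinv : IsUnit γ) (hγ : HyperbolicR γ)
    (heq : ∀ᵐ x ∂μ, v (f x) = γ.mulVec (v x)) :
    v =ᵐ[μ] 0 := by
  have hdet := (isUnit_iff_isUnit_det γ).1 hγinv
  have hmeas (M : Matrix (Fin n) (Fin n) ℝ) : Measurable (M *ᵥ ·) :=
    (Continuous.matrix_mulVec continuous_const continuous_id).measurable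
  have hfwd : MeasurePreserving (γ *ᵥ ·) (μ.map v) (μ.map v) :=
    hf.map_of_ae_semiconj hv (hmeas γ) heq
  have hbwd : MeasurePreserving (γ⁻¹ *ᵥ ·) (μ.map v) (μ.map v) :=
    hfwd.of_leftInverse (hmeas γ⁻¹) fun w => by
      rw [mulVec_mulVec, nonsing_inv_mul _ hdet, one_mulVec]
  suffices h : ∀ᵐ w ∂μ.map v, w = 0 from ae_of_ae_map hv.aemeasurable h
  filter_upwards [hfwd.ae_frequently_norm_iterate_le, hbwd.ae_frequently_norm_iterate_le]
    with w h₁ h₂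
  simp only [iterate_mulVec] at h₁ h₂
  exact hγ.eq_zero_of_frequently_norm_le hγinv h₁ h₂
end

section
/- Let γ ∈ SL(n,ℤ) be hyperbolic (no eigenvalues on the unit circle). If h₁, h₂ : 𝕋ⁿ → 𝕋ⁿ are two continuous maps homotopic to the identity with hᵢ ∘ f = ρ₀(γ) ∘ hᵢ (i = 1,2) for some homeomorphism f of 𝕋ⁿ, then h₁ − h₂ is a constant c with (I − γ)c ∈ ℤⁿ, i.e., c is a fixed point of ρ₀(γ) on the torus. -/
open Matrix MeasureTheory

/-- The integer lattice `ℤⁿ ⊂ ℝⁿ`. -/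
def IntLattice (n : ℕ) : AddSubgroup (Fin n → ℝ) where
  carrier := {x | ∀ i, ∃ m : ℤ, x i = (m : ℝ)}
  zero_mem' := fun i => ⟨0, by simp⟩
  add_mem' := by
    rintro a b ha hb i
    obtain ⟨p, hp⟩ := ha i
    obtain ⟨q, hq⟩ := hb i
    exact ⟨p + q, by simp [hp, hq]⟩
  neg_mem' := by
    rintro a ha i
    obtain ⟨p, hp⟩ := ha i
    exact ⟨-p, by simp [hp]⟩

/-- The torus `𝕋ⁿ = ℝⁿ/ℤⁿ`. -/
abbrev Torus (n : ℕ) := (Fin n → ℝ) ⧸ IntLattice n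

/-- Projection `ℝⁿ → 𝕋ⁿ`. -/
def mkT {n : ℕ} (x : Fin n → ℝ) : Torus n := QuotientAddGroup.mk x

/-- The toral endomorphism induced by an integer matrix. -/
noncomputable def toralMap {n : ℕ} (γ : Matrix (Fin n) (Fin n) ℤ) : Torus n → Torus n :=
  QuotientAddGroup.map _ _ ((γ.map (Int.cast : ℤ → ℝ)).mulVecLin).toAddMonoidHom
    (by
      intro x hx
      simp only [AddSubgroup.mem_comap]
      intro i
      refine ⟨∑ j, γ i j * (hx j).choose, ?_⟩
      simp only [LinearMap.toAddMonoidHom_coe, Matrix.mulVecLin_apply, Matrix.mulVec,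
        dotProduct, Matrix.map_apply]
      push_cast
      exact Finset.sum_congr rfl fun j _ => by
        conv_lhs => rw [(hx j).choose_spec])

/-- An integer matrix is hyperbolic if it has no (complex) eigenvalue of modulus one. -/
def HyperbolicZ {n : ℕ} (A : Matrix (Fin n) (Fin n) ℤ) : Prop :=
  ∀ z : ℂ, ‖z‖ = 1 → ¬ (A.map (fun a => (a : ℂ))).charpoly.IsRoot z

/-!
The difference `v = φ₁ - φ₂` satisfies `v ∘ f = γ v + c(x)` with `c` continuous and
lattice-valued, hence constant on the connected torus. The function `w (x, y) = v x - v y` then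
satisfies `w ∘ (f × f) = γ w` exactly, so every value of `w` has a bounded two-sided `γ`-orbit.
The complex vectors with bounded two-sided orbit form a `γ`-invariant subspace; an eigenvector of
`γ` in it has an eigenvalue of modulus one, so by hyperbolicity that subspace is zero. Hence
`w = 0`, `v` is a constant `d`, and `h₁ - h₂ = [d]` is fixed by `ρ₀(γ)` because
`[v ∘ f] = ρ₀(γ) [v]`.
-/

open Set Bornology

theorem Real.eq_one_of_bddAbove_range_zpow {r : ℝ} (hr : 0 < r)
    (h : BddAbove (range fun k : ℤ => r ^ k)) : r = 1 := by
  obtain ⟨D, hD⟩ := h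
  have hD' : ∀ k : ℤ, r ^ k ≤ D := fun k => hD ⟨k, rfl⟩
  by_contra hne
  rcases lt_or_gt_of_ne hne with hlt | hgt
  · obtain ⟨k, hk⟩ := pow_unbounded_of_one_lt D (one_lt_inv₀ hr |>.mpr hlt)
    have := hD' (-k)
    rw [_root_.zpow_neg, zpow_natCast, ← inv_pow] at this
    linarith
  · obtain ⟨k, hk⟩ := pow_unbounded_of_one_lt D hgt
    have := hD' k
    rw [zpow_natCast] at this
    linarith

section BoundedOrbit

variable {𝕜 E : Type*} [NontriviallyNormedField 𝕜] [NormedAddCommGroup E] [NormedSpace 𝕜 E]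

namespace LinearEquiv

def boundedOrbits (e : E ≃ₗ[𝕜] E) : Submodule 𝕜 E where
  carrier := {x | IsBounded (range fun k : ℤ => (e ^ k) x)}
  zero_mem' := by simp [isBounded_singleton]
  add_mem' {x y} hx hy := by
    refine (hx.add hy).subset ?_
    rintro _ ⟨k, rfl⟩
    exact ⟨_, ⟨k, rfl⟩, _, ⟨k, rfl⟩, (map_add _ x y).symm⟩
  smul_mem' c x hx := by
    refine (hx.smul₀ c).subset ?_
    rintro _ ⟨k, rfl⟩
    exact ⟨_, ⟨k, rfl⟩, (map_smul _ c x).symm⟩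

theorem apply_mem_boundedOrbits {e : E ≃ₗ[𝕜] E} {x : E} (hx : x ∈ e.boundedOrbits) :
    e x ∈ e.boundedOrbits := by
  refine hx.subset ?_
  rintro _ ⟨k, rfl⟩
  exact ⟨k + 1, by simp only [_root_.zpow_add_one, mul_apply]⟩

theorem zpow_apply_of_apply_eq_smul {e : E ≃ₗ[𝕜] E} {μ : 𝕜} {x : E} (hμ : μ ≠ 0)
    (hx : e x = μ • x) (k : ℤ) : (e ^ k) x = μ ^ k • x := by
  have hinv : e⁻¹ x = μ⁻¹ • x := by
    rw [eq_inv_smul_iff₀ hμ, ← map_smul, ← hx, coe_inv, symm_apply_apply]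
  induction k using Int.induction_on with
  | zero => simp
  | succ k ih =>
    rw [_root_.zpow_add_one, mul_apply, hx, map_smul, ih, smul_smul, zpow_add_one₀ hμ, mul_comm]
  | pred k ih =>
    rw [_root_.zpow_sub_one, mul_apply, hinv, map_smul, ih, smul_smul, zpow_sub_one₀ hμ, mul_comm]

theorem eq_zero_of_isBounded_range_zpow [IsAlgClosed 𝕜] [FiniteDimensional 𝕜 E] {e : E ≃ₗ[𝕜] E}
    (he : ∀ μ : 𝕜, ‖μ‖ = 1 → ¬ Module.End.HasEigenvalue (e : Module.End 𝕜 E) μ) {x : E}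
    (hx : IsBounded (range fun k : ℤ => (e ^ k) x)) : x = 0 := by
  by_contra hx0
  have : Nontrivial e.boundedOrbits := ⟨⟨⟨x, hx⟩, 0, fun h => hx0 (congrArg Subtype.val h)⟩⟩
  obtain ⟨μ, hμ⟩ := Module.End.exists_eigenvalue
    ((e : Module.End 𝕜 E).restrict fun _ => apply_mem_boundedOrbits)
  obtain ⟨⟨u, hu⟩, hvec⟩ := hμ.exists_hasEigenvector
  have hu0 : u ≠ 0 := by simpa using hvec.2
  have heu : e u = μ • u := by simpa using congrArg Subtype.val hvec.apply_eq_smul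
  have hμ0 : μ ≠ 0 := by
    rintro rfl
    exact hu0 (e.map_eq_zero_iff.mp (by simpa using heu))
  refine he μ ?_ (Module.End.hasEigenvalue_of_hasEigenvector ⟨by simpa using heu, hu0⟩)
  have hbdd : BddAbove (range fun k : ℤ => ‖μ‖ ^ k) := by
    obtain ⟨C, hC⟩ := isBounded_iff_forall_norm_le.mp hu
    refine ⟨C / ‖u‖, ?_⟩
    rintro _ ⟨k, rfl⟩
    have := hC _ ⟨k, rfl⟩
    dsimp only at this ⊢
    rw [zpow_apply_of_apply_eq_smul hμ0 heu, norm_smul, norm_zpow] at this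
    exact (le_div_iff₀ (norm_pos_iff.mpr hu0)).mpr this
  exact Real.eq_one_of_bddAbove_range_zpow (norm_pos_iff.mpr hμ0) hbdd

theorem eq_zero_of_semiconj_of_isBounded {X : Type*} [IsAlgClosed 𝕜] [FiniteDimensional 𝕜 E]
    {e : E ≃ₗ[𝕜] E} (he : ∀ μ : 𝕜, ‖μ‖ = 1 → ¬ Module.End.HasEigenvalue (e : Module.End 𝕜 E) μ)
    {F : Equiv.Perm X} {w : X → E} (hwF : Function.Semiconj w F e) (hw : IsBounded (range w)) :
    w = 0 := by
  have horbit : ∀ (k : ℤ) x, (e ^ k) (w x) = w ((F ^ k) x) := by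
    intro k
    induction k using Int.induction_on with
    | zero => simp
    | succ k ih =>
      intro x
      rw [_root_.zpow_add_one, _root_.zpow_add_one, mul_apply, ← hwF.eq, ih, Equiv.Perm.mul_apply]
    | pred k ih =>
      intro x
      have hinv : e⁻¹ (w x) = w (F⁻¹ x) := by
        rw [coe_inv, symm_apply_eq, ← hwF.eq, Equiv.Perm.inv_def, Equiv.apply_symm_apply]
      rw [_root_.zpow_sub_one, _root_.zpow_sub_one, mul_apply, hinv, ih, Equiv.Perm.mul_apply]
  funext x
  refine eq_zero_of_isBounded_range_zpow he (hw.subset ?_)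
  rintro _ ⟨k, rfl⟩
  exact ⟨_, (horbit k x).symm⟩

end LinearEquiv
end BoundedOrbit

section Torus

variable {n : ℕ}

theorem mkT_eq_zero {x : Fin n → ℝ} : mkT x = 0 ↔ x ∈ IntLattice n :=
  QuotientAddGroup.eq_zero_iff x

theorem mkT_sub (x y : Fin n → ℝ) : mkT (x - y) = mkT x - mkT y := rfl

theorem toralMap_mkT (M : Matrix (Fin n) (Fin n) ℤ) (x : Fin n → ℝ) :
    toralMap M (mkT x) = mkT (M.map (Int.cast : ℤ → ℝ) *ᵥ x) := rfl

theorem toralMap_sub (M : Matrix (Fin n) (Fin n) ℤ) (a b : Torus n) :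
    toralMap M (a - b) = toralMap M a - toralMap M b :=
  map_sub _ a b

instance : ConnectedSpace (Torus n) := Quotient.instConnectedSpace

theorem mkT_fract (x : Fin n → ℝ) : mkT (fun i => Int.fract (x i)) = mkT x := by
  refine QuotientAddGroup.eq.mpr fun i => ⟨⌊x i⌋, ?_⟩
  simp only [Pi.add_apply, Pi.neg_apply, Int.fract]
  ring

instance : CompactSpace (Torus n) := by
  have hcube : mkT '' Icc (0 : Fin n → ℝ) 1 = univ := by
    refine eq_univ_of_forall fun q => ?_
    induction q using QuotientAddGroup.induction_on with | H x => ?_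
    exact ⟨_, ⟨fun i => Int.fract_nonneg (x i), fun i => (Int.fract_lt_one (x i)).le⟩, mkT_fract x⟩
  exact isCompact_univ_iff.mp (hcube ▸ isCompact_Icc.image continuous_quot_mk)

theorem eq_of_continuous_of_forall_mem_intLattice {X : Type*} [TopologicalSpace X]
    [PreconnectedSpace X] {g : X → Fin n → ℝ} (hg : Continuous g) (hgL : ∀ x, g x ∈ IntLattice n)
    (x y : X) : g x = g y := by
  funext i
  choose m hm using fun x => hgL x i
  have hm_cont : Continuous m :=
    Int.isClosedEmbedding_coe_real.continuous_iff.mpr <| by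
      simpa only [Function.comp_def, ← hm] using (continuous_apply i).comp hg
  rw [hm, hm, PreconnectedSpace.constant ‹_› hm_cont]

end Torus

section Hyperbolic

variable {n : ℕ}

theorem norm_ofReal_comp {ι : Type*} [Fintype ι] (z : ι → ℝ) : ‖fun i => (z i : ℂ)‖ = ‖z‖ := by
  simp [Pi.norm_def, Complex.nnnorm_real]

theorem HyperbolicZ.not_hasEigenvalue {γ : SpecialLinearGroup (Fin n) ℤ}
    (hγ : HyperbolicZ (γ : Matrix (Fin n) (Fin n) ℤ)) {μ : ℂ} (hμ : ‖μ‖ = 1) :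
    ¬ Module.End.HasEigenvalue
      (SpecialLinearGroup.toLin' (SpecialLinearGroup.map (Int.castRingHom ℂ) γ) :
        Module.End ℂ (Fin n → ℂ)) μ := by
  rw [Module.End.hasEigenvalue_iff_isRoot_charpoly, SpecialLinearGroup.toLin'_to_linearMap,
    Matrix.charpoly_toLin', SpecialLinearGroup.map_apply_coe]
  exact hγ μ hμ

theorem HyperbolicZ.eq_of_comp_eq_mulVec_add {γ : SpecialLinearGroup (Fin n) ℤ}
    (hγ : HyperbolicZ (γ : Matrix (Fin n) (Fin n) ℤ)) {X : Type*} (f : X ≃ X)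
    {v : X → Fin n → ℝ} (hv : IsBounded (range v)) {c : Fin n → ℝ}
    (hvf : ∀ x, v (f x) = (γ : Matrix (Fin n) (Fin n) ℤ).map (Int.cast : ℤ → ℝ) *ᵥ v x + c)
    (x y : X) : v x = v y := by
  set w : X × X → Fin n → ℂ := fun p i => (v p.1 i - v p.2 i : ℝ)
  have hw : IsBounded (range w) := by
    obtain ⟨C, hC⟩ := isBounded_iff_forall_norm_le.mp hv
    refine isBounded_iff_forall_norm_le.mpr ⟨C + C, ?_⟩
    rintro _ ⟨⟨x, y⟩, rfl⟩
    rw [norm_ofReal_comp]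
    exact (norm_sub_le _ _).trans (add_le_add (hC _ ⟨x, rfl⟩) (hC _ ⟨y, rfl⟩))
  -- the constant `c` cancels in differences
  have hwF : Function.Semiconj w (f.prodCongr f)
      (SpecialLinearGroup.toLin' (SpecialLinearGroup.map (Int.castRingHom ℂ) γ)) := by
    rintro ⟨x, y⟩
    funext i
    simp [w, hvf, SpecialLinearGroup.toLin'_apply, Matrix.mulVec, dotProduct, mul_sub]
  have hw0 := LinearEquiv.eq_zero_of_semiconj_of_isBounded (fun μ => hγ.not_hasEigenvalue) hwF hw
  funext i
  simpa [w, sub_eq_zero] using congrFun (congrFun hw0 (x, y)) i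

end Hyperbolic

theorem stmt_6_general {n : ℕ} (γ : Matrix.SpecialLinearGroup (Fin n) ℤ)
    (hγ : HyperbolicZ (γ : Matrix (Fin n) (Fin n) ℤ))
    (f : Torus n ≃ₜ Torus n)
    (h₁ h₂ : Torus n → Torus n)
    (φ₁ φ₂ : Torus n → Fin n → ℝ) (hφ₁ : Continuous φ₁) (hφ₂ : Continuous φ₂)
    (hh₁ : ∀ x, h₁ x = x + mkT (φ₁ x)) (hh₂ : ∀ x, h₂ x = x + mkT (φ₂ x))
    (hsemi₁ : h₁ ∘ f = toralMap (γ : Matrix (Fin n) (Fin n) ℤ) ∘ h₁)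
    (hsemi₂ : h₂ ∘ f = toralMap (γ : Matrix (Fin n) (Fin n) ℤ) ∘ h₂) :
    ∃ c : Torus n, (∀ x, h₁ x - h₂ x = c) ∧
      toralMap (γ : Matrix (Fin n) (Fin n) ℤ) c = c := by
  set v : Torus n → Fin n → ℝ := fun x => φ₁ x - φ₂ x
  have hv : Continuous v := hφ₁.sub hφ₂
  have hdiff : ∀ x, h₁ x - h₂ x = mkT (v x) := fun x => by
    rw [hh₁, hh₂, mkT_sub]
    abel
  have hvf : ∀ x, mkT (v (f x)) = toralMap γ (mkT (v x)) := fun x => by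
    rw [← hdiff, ← hdiff, toralMap_sub]
    exact congrArg₂ (· - ·) (congrFun hsemi₁ x) (congrFun hsemi₂ x)
  obtain ⟨c, hc⟩ :
      ∃ c, ∀ x, v (f x) = (γ : Matrix (Fin n) (Fin n) ℤ).map Int.cast *ᵥ v x + c := by
    set g : Torus n → Fin n → ℝ :=
      fun x => v (f x) - (γ : Matrix (Fin n) (Fin n) ℤ).map Int.cast *ᵥ v x
    have hg : Continuous g := (hv.comp f.continuous).sub (continuous_const.matrix_mulVec hv)
    have hgL : ∀ x, g x ∈ IntLattice n := fun x =>
      mkT_eq_zero.mp (by rw [mkT_sub, hvf, toralMap_mkT, sub_self])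
    exact ⟨g 0, fun x => eq_add_of_sub_eq' (eq_of_continuous_of_forall_mem_intLattice hg hgL x 0)⟩
  have hv_const : ∀ x, v x = v 0 :=
    fun x => hγ.eq_of_comp_eq_mulVec_add f.toEquiv (isCompact_range hv).isBounded hc x 0
  refine ⟨mkT (v 0), fun x => by rw [hdiff, hv_const], ?_⟩
  rw [← hvf, hv_const]

/-- If `γ ∈ SL(n,ℤ)` is hyperbolic and `h₁, h₂ : 𝕋ⁿ → 𝕋ⁿ` are continuous maps
homotopic to the identity (`hᵢ(x) = x + φᵢ(x)` with `φᵢ : 𝕋ⁿ → ℝⁿ` continuous), both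
semiconjugating a homeomorphism `f` with `ρ₀(γ)`, then `h₁ - h₂` is a constant `c` which is
a fixed point of `ρ₀(γ)` on the torus. -/
theorem stmt_6 {n : ℕ} (γ : Matrix.SpecialLinearGroup (Fin n) ℤ)
    (hγ : HyperbolicZ (γ : Matrix (Fin n) (Fin n) ℤ))
    (f : Torus n ≃ₜ Torus n)
    (h₁ h₂ : Torus n → Torus n) (hc₁ : Continuous h₁) (hc₂ : Continuous h₂)
    (φ₁ φ₂ : Torus n → Fin n → ℝ) (hφ₁ : Continuous φ₁) (hφ₂ : Continuous φ₂)
    (hh₁ : ∀ x, h₁ x = x + mkT (φ₁ x)) (hh₂ : ∀ x, h₂ x = x + mkT (φ₂ x))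
    (hsemi₁ : h₁ ∘ f = toralMap (γ : Matrix (Fin n) (Fin n) ℤ) ∘ h₁)
    (hsemi₂ : h₂ ∘ f = toralMap (γ : Matrix (Fin n) (Fin n) ℤ) ∘ h₂) :
    ∃ c : Torus n, (∀ x, h₁ x - h₂ x = c) ∧
      toralMap (γ : Matrix (Fin n) (Fin n) ℤ) c = c :=
  stmt_6_general γ hγ f h₁ h₂ φ₁ φ₂ hφ₁ hφ₂ hh₁ hh₂ hsemi₁ hsemi₂
end
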